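/- Let a be bounded measurable with a ≥ 0 a.e. For every u ∈ 𝒩_a there exists t ∈ (0, 1] such that t·|u| ∈ 𝒩_a and E_a(t|u|) ≤ E_a(u); here |u| denotes x ↦ |u(x)|. Consequently, any minimizing sequence for E_a on 𝒩_a can be replaced by a minimizing sequence of nonnegative functions. -/

import Mathlib

open MeasureTheory Filter

noncomputable section

/-- Euclidean space `ℝ^N`. -/
abbrev RN (N : ℕ) : Type := EuclideanSpace ℝ (Fin N)

/-- The `H^s` bilinear form `⟨u,v⟩_s`. -/
def gIn (N : ℕ) (s : ℝ) (u v : RN N → ℝ) : ℝ :=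
  (∫ x : RN N, u x * v x) +
    ∫ q : RN N × RN N, (u q.1 - u q.2) * (v q.1 - v q.2) * ‖q.1 - q.2‖ ^ (-((N : ℝ) + 2 * s))

/-- The `H^s` norm `‖u‖_s`. -/
def HsNorm (N : ℕ) (s : ℝ) (u : RN N → ℝ) : ℝ := Real.sqrt (gIn N s u u)

/-- The fractional Sobolev space `H^s = {u ∈ L² : ‖u‖_s < ∞}`. -/
def HsSet (N : ℕ) (s : ℝ) : Set (RN N → ℝ) :=
  {u | MemLp u 2 volume ∧
    (∫⁻ q : RN N × RN N,
        ENNReal.ofReal ((u q.1 - u q.2) ^ 2 * ‖q.1 - q.2‖ ^ (-((N : ℝ) + 2 * s)))) < ⊤}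

/-- The Riesz potential normalization constant `c_α`. -/
def cRiesz (N : ℕ) (α : ℝ) : ℝ :=
  Real.Gamma (((N : ℝ) - α) / 2) / (Real.Gamma (α / 2) * Real.pi ^ ((N : ℝ) / 2) * 2 ^ α)

/-- The nonlocal term `D_a(u) = c_α ∬ (1+a(x)) |u(x)|^p |u(y)|^p |x-y|^{α-N}`. -/
def Dfn (N : ℕ) (α p : ℝ) (a u : RN N → ℝ) : ℝ :=
  cRiesz N α *
    ∫ q : RN N × RN N, (1 + a q.1) * |u q.1| ^ p * |u q.2| ^ p * ‖q.1 - q.2‖ ^ (α - (N : ℝ))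

/-- The nonlocal term `T_a(u)[v] = c_α ∬ (1+a(x)) |u(y)|^p |u(x)|^{p-2} u(x) v(x) |x-y|^{α-N}`. -/
def Tfn (N : ℕ) (α p : ℝ) (a u v : RN N → ℝ) : ℝ :=
  cRiesz N α *
    ∫ q : RN N × RN N,
      (1 + a q.1) * |u q.2| ^ p * |u q.1| ^ (p - 2) * u q.1 * v q.1 * ‖q.1 - q.2‖ ^ (α - (N : ℝ))

/-- The energy functional `E_a(u) = ½‖u‖_s² - (1/(2p)) D_a(u)`. -/
def Efn (N : ℕ) (s α p : ℝ) (a u : RN N → ℝ) : ℝ :=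
  (1 / 2) * gIn N s u u - (1 / (2 * p)) * Dfn N α p a u

/-- The Nehari set `𝒩_a`. -/
def Nehari (N : ℕ) (s α p : ℝ) (a : RN N → ℝ) : Set (RN N → ℝ) :=
  {u | u ∈ HsSet N s ∧ ¬(u =ᵐ[volume] (0 : RN N → ℝ)) ∧ gIn N s u u = Dfn N α p a u}


/-!
Passing from `u` to `|u|` leaves `D_a` unchanged and does not increase the Gagliardo seminorm, so
`‖|u|‖_s² ≤ ‖u‖_s² = D_a(u) = D_a(|u|)`. Along the ray `t ↦ t|u|` the norm scales like `t²` and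
`D_a` like `t^{2p}`, so the ray meets `𝒩_a` at `t = (‖|u|‖_s² / D_a(u))^{1/(2p-2)} ≤ 1`.
On `𝒩_a` the energy is `(1/2 - 1/(2p)) ‖·‖_s²`, and `t² ‖|u|‖_s² ≤ ‖u‖_s²`.
-/

lemma exists_sq_mul_eq_rpow_sq_mul {G D p : ℝ} (hp : 1 < p) (hG : 0 < G) (hGD : G ≤ D) :
    ∃ t : ℝ, 0 < t ∧ t ≤ 1 ∧ t ^ 2 * G = (t ^ p) ^ 2 * D := by
  have hD : 0 < D := hG.trans_le hGD
  have hr : 0 < G / D := div_pos hG hD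
  have he : 0 < 1 / (2 * p - 2) := one_div_pos.2 (by linarith)
  refine ⟨(G / D) ^ (1 / (2 * p - 2)), Real.rpow_pos_of_pos hr _,
    Real.rpow_le_one hr.le ((div_le_one hD).2 hGD) he.le, ?_⟩
  set t := (G / D) ^ (1 / (2 * p - 2)) with ht
  have ht0 : 0 < t := Real.rpow_pos_of_pos hr _
  have hkey : t ^ (2 * p - 2) = G / D := by
    rw [ht, ← Real.rpow_mul hr.le, one_div_mul_cancel (by linarith), Real.rpow_one]
  calc t ^ 2 * G = t ^ 2 * (G / D) * D := by rw [mul_assoc, div_mul_cancel₀ _ hD.ne']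
    _ = t ^ ((2 : ℝ) + (2 * p - 2)) * D := by
      rw [Real.rpow_add ht0, hkey, Real.rpow_two]
    _ = (t ^ p) ^ 2 * D := by
      rw [← Real.rpow_natCast, ← Real.rpow_mul ht0.le]; congr 2; push_cast; ring

section AEZero

variable {X : Type*} [MeasurableSpace X] {μ : Measure X} {u : X → ℝ}

lemma not_ae_eq_zero_abs (hu : ¬u =ᵐ[μ] 0) : ¬(fun x => |u x|) =ᵐ[μ] 0 := fun h =>
  hu <| h.mono fun x hx => by simpa using hx

lemma not_ae_eq_zero_const_mul {t : ℝ} (ht : t ≠ 0) (hu : ¬u =ᵐ[μ] 0) :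
    ¬(fun x => t * u x) =ᵐ[μ] 0 := fun h =>
  hu <| h.mono fun x hx => by simpa [ht] using hx

end AEZero

section Functionals

variable {N : ℕ} {s α p : ℝ}

lemma integrable_gagliardo_of_mem_HsSet {u : RN N → ℝ} (hu : u ∈ HsSet N s) :
    Integrable (fun q : RN N × RN N =>
      (u q.1 - u q.2) ^ 2 * ‖q.1 - q.2‖ ^ (-((N : ℝ) + 2 * s))) := by
  have hum := hu.1.aestronglyMeasurable.aemeasurable
  rw [Measure.volume_eq_prod]
  refine ⟨AEMeasurable.aestronglyMeasurable ?_, ?_⟩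
  · exact ((hum.comp_fst.sub hum.comp_snd).pow_const 2).mul
      ((measurable_fst.sub measurable_snd).norm.pow_const _).aemeasurable
  · rw [hasFiniteIntegral_iff_ofReal (.of_forall fun q => by positivity)]
    exact hu.2

lemma HsSet.abs_mem {u : RN N → ℝ} (hu : u ∈ HsSet N s) : (fun x => |u x|) ∈ HsSet N s := by
  refine ⟨by simpa only [Real.norm_eq_abs] using hu.1.norm, lt_of_le_of_lt ?_ hu.2⟩
  refine lintegral_mono fun q => ENNReal.ofReal_le_ofReal ?_
  exact mul_le_mul_of_nonneg_right (sq_le_sq.2 (abs_abs_sub_abs_le_abs_sub (u q.1) (u q.2)))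
    (by positivity)

lemma HsSet.const_mul_mem (c : ℝ) {u : RN N → ℝ} (hu : u ∈ HsSet N s) :
    (fun x => c * u x) ∈ HsSet N s := by
  refine ⟨hu.1.const_mul c, ?_⟩
  have hscale : ∀ q : RN N × RN N, (c * u q.1 - c * u q.2) ^ 2 * ‖q.1 - q.2‖ ^ (-((N : ℝ) + 2 * s))
      = c ^ 2 * ((u q.1 - u q.2) ^ 2 * ‖q.1 - q.2‖ ^ (-((N : ℝ) + 2 * s))) := fun q => by ring
  simp only [hscale, ENNReal.ofReal_mul (sq_nonneg c)]
  rw [lintegral_const_mul' _ _ ENNReal.ofReal_ne_top]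
  exact ENNReal.mul_lt_top ENNReal.ofReal_lt_top hu.2

lemma gIn_const_mul_self (c : ℝ) (u : RN N → ℝ) :
    gIn N s (fun x => c * u x) (fun x => c * u x) = c ^ 2 * gIn N s u u := by
  simp only [gIn, mul_add, ← integral_const_mul]
  congr 1 <;> exact integral_congr_ae (.of_forall fun _ => by ring)

lemma gIn_abs_le {u : RN N → ℝ} (hu : u ∈ HsSet N s) :
    gIn N s (fun x => |u x|) (fun x => |u x|) ≤ gIn N s u u := by
  simp only [gIn, ← sq, sq_abs]
  refine add_le_add_right (integral_mono_of_nonneg (.of_forall fun q => by positivity)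
    (integrable_gagliardo_of_mem_HsSet hu) (.of_forall fun q => ?_)) _
  exact mul_le_mul_of_nonneg_right (sq_le_sq.2 (abs_abs_sub_abs_le_abs_sub (u q.1) (u q.2)))
    (by positivity)

lemma gIn_self_pos {u : RN N → ℝ} (hu : MemLp u 2 volume) (hu0 : ¬u =ᵐ[volume] 0) :
    0 < gIn N s u u := by
  have hL2 : 0 < ∫ x : RN N, u x * u x := by
    refine lt_of_le_of_ne (integral_nonneg fun x => mul_self_nonneg _) fun h => hu0 ?_
    have hint : Integrable (fun x => u x * u x) := by simpa only [sq] using hu.integrable_sq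
    filter_upwards [(integral_eq_zero_iff_of_nonneg (fun x => mul_self_nonneg (u x)) hint).1
      h.symm] with x hx
    exact mul_self_eq_zero.1 hx
  exact add_pos_of_pos_of_nonneg hL2 (integral_nonneg fun q =>
    mul_nonneg (mul_self_nonneg _) (by positivity))

lemma Dfn_abs (a u : RN N → ℝ) : Dfn N α p a (fun x => |u x|) = Dfn N α p a u := by
  simp only [Dfn, abs_abs]

lemma Dfn_const_mul (a u : RN N → ℝ) (c : ℝ) :
    Dfn N α p a (fun x => c * u x) = (|c| ^ p) ^ 2 * Dfn N α p a u := by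
  simp only [Dfn, abs_mul, Real.mul_rpow (abs_nonneg c) (abs_nonneg _), ← integral_const_mul]
  congr 1; ext q; ring

lemma Efn_eq_of_mem_Nehari {a u : RN N → ℝ} (hu : u ∈ Nehari N s α p a) :
    Efn N s α p a u = (1 / 2 - 1 / (2 * p)) * gIn N s u u := by
  rw [Efn, ← hu.2.2]; ring

end Functionals

theorem stmt_18_general {N : ℕ} {s α p : ℝ}
    (hp : 2 ≤ p)
    (a : RN N → ℝ)
    (u : RN N → ℝ) (hu : u ∈ Nehari N s α p a) :
    ∃ t : ℝ, 0 < t ∧ t ≤ 1 ∧ (fun x => t * |u x|) ∈ Nehari N s α p a ∧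
      Efn N s α p a (fun x => t * |u x|) ≤ Efn N s α p a u := by
  obtain ⟨huH, hu0, huD⟩ := hu
  have hvH : (fun x => |u x|) ∈ HsSet N s := HsSet.abs_mem huH
  have hvpos : 0 < gIn N s (fun x => |u x|) (fun x => |u x|) :=
    gIn_self_pos hvH.1 (not_ae_eq_zero_abs hu0)
  have hvle : gIn N s (fun x => |u x|) (fun x => |u x|) ≤ gIn N s u u := gIn_abs_le huH
  obtain ⟨t, ht0, ht1, hfiber⟩ := exists_sq_mul_eq_rpow_sq_mul (p := p) (by linarith) hvpos
    (hvle.trans_eq (huD.trans (Dfn_abs a u).symm))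
  have htv : (fun x => t * |u x|) ∈ Nehari N s α p a :=
    ⟨HsSet.const_mul_mem t hvH, not_ae_eq_zero_const_mul ht0.ne' (not_ae_eq_zero_abs hu0), by
      rw [gIn_const_mul_self, Dfn_const_mul, abs_of_pos ht0, hfiber]⟩
  refine ⟨t, ht0, ht1, htv, ?_⟩
  rw [Efn_eq_of_mem_Nehari htv, Efn_eq_of_mem_Nehari ⟨huH, hu0, huD⟩, gIn_const_mul_self]
  have hcoef : 0 ≤ 1 / 2 - 1 / (2 * p) := by
    rw [sub_nonneg]; gcongr; linarith
  gcongr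
  exact (mul_le_of_le_one_left hvpos.le (pow_le_one₀ ht0.le ht1)).trans hvle

theorem stmt_18 {N : ℕ} (hN : 1 ≤ N) {s α p : ℝ}
    (hs0 : 0 < s) (hs1 : s < 1) (hα0 : 0 < α) (hαN : α < (N : ℝ))
    (hp : 2 ≤ p)
    (hlow : ((N : ℝ) - 2 * s) / ((N : ℝ) + α) < 1 / p)
    (hhigh : 1 / p < (N : ℝ) / ((N : ℝ) + α))
    (a : RN N → ℝ) (ha_meas : Measurable a) (ha_bdd : ∃ M : ℝ, ∀ x, |a x| ≤ M)
    (ha_nonneg : ∀ᵐ x ∂(volume : Measure (RN N)), 0 ≤ a x)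
    (u : RN N → ℝ) (hu : u ∈ Nehari N s α p a) :
    ∃ t : ℝ, 0 < t ∧ t ≤ 1 ∧ (fun x => t * |u x|) ∈ Nehari N s α p a ∧
      Efn N s α p a (fun x => t * |u x|) ≤ Efn N s α p a u :=
  stmt_18_general hp a u hu
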